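/- Let (X,‖·‖) be a separable real Banach space, ϑ ∈ P_X and x ∈ X. Let {y_{j,l} | 1 ≤ j ≤ k, 1 ≤ l ≤ d_j} ⊂ X be pairwise distinct points such that ρ_j := ‖x − y_{j,1}‖ = ‖x − y_{j,l}‖ for all 1 ≤ l ≤ d_j and each 1 ≤ j ≤ k, with ρ_j > ρ_{j+1} > 0 for 1 ≤ j ≤ k−1, and with w_{j,l} := ϑ({y_{j,l}}) > 0 for all j,l. Set w_j := Σ_{l=1}^{d_j} w_{j,l}, w̃ := 1 − Σ_{j=1}^{k} w_j, and for 0 ≤ r ≤ k let η_r := Σ_{j=1}^{r} Σ_{l=1}^{d_j} w_{j,l}·δ_{y_{j,l}} + (1 − Σ_{j=1}^{r} w_j)·δ_x. Assume w̃ > 0 and let ϑ̃ ∈ P_X be the measure with ϑ = Σ_{j=1}^{k} Σ_{l=1}^{d_j} w_{j,l}·δ_{y_{j,l}} + w̃·ϑ̃. For 1 ≤ r ≤ k say that x has property (P_r) if π(η_{r−1}, ϑ) ≤ ρ_r. Then: W_{w̃,ϑ̃}(x) = π(δ_x, ϑ) if x does not have (P_1); W_{w̃,ϑ̃}(x) =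 π(η_r, ϑ) if x has (P_r) but not (P_{r+1}) for some 1 ≤ r < k; and W_{w̃,ϑ̃}(x) = π(η_k, ϑ) if x has (P_k). -/

import Mathlib

open MeasureTheory Metric Set TopologicalSpace

/-- The (one-sided) Lévy–Prokhorov distance of two Borel probability measures. -/
noncomputable def LPdist {X : Type*} [MetricSpace X] [MeasurableSpace X]
    (μ ν : ProbabilityMeasure X) : ℝ :=
  sInf {ε : ℝ | 0 < ε ∧ ∀ A : Set X, MeasurableSet A →
    (μ : Measure X) A ≤ (ν : Measure X) (thickening ε A) + ENNReal.ofReal ε}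

/-- The s-Lévy–Prokhorov distance. -/
noncomputable def LPsdist {X : Type*} [MetricSpace X] [MeasurableSpace X]
    (s : ℝ) (μ ν : ProbabilityMeasure X) : ℝ :=
  sInf {ε : ℝ | 0 < ε ∧ ∀ A : Set X, MeasurableSet A →
    ENNReal.ofReal s * (μ : Measure X) A ≤
      ENNReal.ofReal s * (ν : Measure X) (thickening ε A) + ENNReal.ofReal ε}

/-- The support of a Borel probability measure. -/
def mSupport {X : Type*} [MetricSpace X] [MeasurableSpace X]
    (μ : ProbabilityMeasure X) : Set X :=
  {x : X | ∀ r : ℝ, 0 < r → 0 < (μ : Measure X) (ball x r)}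

/-- The Dirac measure as a probability measure. -/
noncomputable def diracPM {X : Type*} [MeasurableSpace X] (x : X) : ProbabilityMeasure X :=
  ⟨Measure.dirac x, inferInstance⟩

/-- Finitely supported probability measures: finite convex combinations of Dirac measures. -/
def IsFinitelySupported {X : Type*} [MeasurableSpace X] (μ : ProbabilityMeasure X) : Prop :=
  ∃ (s : Finset X) (w : X → ℝ), (∀ x ∈ s, 0 < w x) ∧ (∑ x ∈ s, w x = 1) ∧
    (μ : Measure X) = ∑ x ∈ s, ENNReal.ofReal (w x) • Measure.dirac x

/-- The unit distance set of a set of probability measures. -/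
def unitDistSet {X : Type*} [MetricSpace X] [MeasurableSpace X]
    (𝒜 : Set (ProbabilityMeasure X)) : Set (ProbabilityMeasure X) :=
  {ν | ∀ μ ∈ 𝒜, LPdist μ ν = 1}

/-- The witness function. -/
noncomputable def witness {X : Type*} [MetricSpace X] [MeasurableSpace X]
    (μ : ProbabilityMeasure X) (x : X) : ℝ :=
  LPdist (diracPM x) μ

/-- The s-witness function. -/
noncomputable def switness {X : Type*} [MetricSpace X] [MeasurableSpace X]
    (s : ℝ) (μ : ProbabilityMeasure X) (x : X) : ℝ :=
  LPsdist s (diracPM x) μ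

/-!
Split `ϑ = α_r + β_r + w̃ ϑ̃`, where `α_r` carries the atoms on the spheres of radii
`ρ_1 > … > ρ_r` around `x` and `β_r` those on the remaining spheres, so that
`η_r = α_r + (w̃ + β_r(X)) δ_x`. For `ε > ρ_{r+1}` the measure `β_r` lives in `B(x, ε)`, and for
`ε ≤ ρ_r` the measure `α_r` does not charge it; in this window the Lévy–Prokhorov condition for
`(η_r, ϑ)` at level `ε` is equivalent to the `w̃`-witness condition `w̃ ≤ w̃ ϑ̃(B(x, ε)) + ε`.
Both sets of admissible `ε` are up-closed, so their infima coincide once each is located in the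
window: `¬(P_{r+1})` puts `π(η_r, ϑ)` above `ρ_{r+1}`, and `(P_r)` applied to the window of
`η_{r-1}` puts the witness value below `ρ_r`.
-/

section Infima

variable {S E : Set ℝ}

lemma IsUpperSet.mem_of_csInf_lt (hE : IsUpperSet E) (hne : E.Nonempty) {ε : ℝ}
    (h : sInf E < ε) : ε ∈ E :=
  let ⟨_, ha, hlt⟩ := exists_lt_of_csInf_lt hne h
  hE hlt.le ha

lemma csInf_le_of_inter_Ioc_subset (hS : BddBelow S) (hE : IsUpperSet E) (hEne : E.Nonempty)
    {a b c : ℝ} (hsub : E ∩ Ioc a b ⊆ S) (hac : a ≤ c) (hc : sInf E ≤ c) (hcb : c < b) :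
    sInf S ≤ c := by
  refine le_of_forall_gt_imp_ge_of_dense fun ε hε => ?_
  have hmin : c < min ε b := lt_min hε hcb
  have hmem : min ε b ∈ S :=
    hsub ⟨hE.mem_of_csInf_lt hEne (hc.trans_lt hmin), hac.trans_lt hmin, min_le_right _ _⟩
  exact (csInf_le hS hmem).trans (min_le_left _ _)

lemma csInf_eq_of_inter_subset (hS : BddBelow S) (hSup : IsUpperSet S) (hSne : S.Nonempty)
    (hE : BddBelow E) (hEup : IsUpperSet E) (hEne : E.Nonempty) {a b : ℝ}
    (hSE : S ∩ Ioi a ⊆ E) (hES : E ∩ Iic b ⊆ S) (ha : a < sInf E) (hb : sInf S ≤ b) :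
    sInf S = sInf E := by
  have hSE' (c : ℝ) : S ∩ Ioc a c ⊆ E :=
    (inter_subset_inter_right _ Ioc_subset_Ioi_self).trans hSE
  have haS : a < sInf S := by
    by_contra! h
    exact ha.not_ge (csInf_le_of_inter_Ioc_subset hE hSup hSne (hSE' (a + 1)) le_rfl h
      (lt_add_one a))
  refine le_antisymm ?_ (csInf_le_of_inter_Ioc_subset hE hSup hSne (hSE' _) haS.le le_rfl
    (lt_add_one _))
  rcases lt_or_ge (sInf E) b with h | h
  · exact csInf_le_of_inter_Ioc_subset hS hEup hEne
      ((inter_subset_inter_right _ Ioc_subset_Iic_self).trans hES) le_rfl le_rfl h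
  · exact hb.trans h

end Infima

lemma Finset.sum_Icc_one_add_sum_Ioc {M : Type*} [AddCommMonoid M] (f : ℕ → M) {r k : ℕ}
    (hrk : r ≤ k) :
    ∑ j ∈ Finset.Icc 1 r, f j + ∑ j ∈ Finset.Ioc r k, f j = ∑ j ∈ Finset.Icc 1 k, f j := by
  have hIcc (n : ℕ) : Finset.Icc 1 n = Finset.Ioc 0 n := Finset.Icc_add_one_left_eq_Ioc 0 n
  rw [hIcc, hIcc, Finset.sum_Ioc_consecutive f (Nat.zero_le r) hrk]

lemma antitoneOn_Icc_one_of_add_one_lt {β : Type*} [Preorder β] {f : ℕ → β} {k : ℕ}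
    (h : ∀ j ∈ Finset.Icc 1 (k - 1), f (j + 1) < f j) : AntitoneOn f (Icc 1 k) :=
  (strictAntiOn_of_add_one_lt ordConnected_Icc fun j _ hj hj1 =>
    h j (Finset.mem_Icc.2 ⟨hj.1, Nat.le_sub_one_of_lt hj1.2⟩)).antitoneOn

section LevyProkhorov

variable {X : Type*} [MetricSpace X] [MeasurableSpace X]

def lpSet (μ ν : Measure X) : Set ℝ :=
  {ε | 0 < ε ∧ ∀ A : Set X, MeasurableSet A → μ A ≤ ν (thickening ε A) + ENNReal.ofReal ε}

def switnessSet (s : ℝ) (ν : Measure X) (x : X) : Set ℝ :=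
  {ε | 0 < ε ∧ ENNReal.ofReal s ≤ ENNReal.ofReal s * ν (ball x ε) + ENNReal.ofReal ε}

lemma LPdist_eq_sInf_lpSet (μ ν : ProbabilityMeasure X) :
    LPdist μ ν = sInf (lpSet (μ : Measure X) ν) :=
  rfl

lemma LPdist_nonneg (μ ν : ProbabilityMeasure X) : 0 ≤ LPdist μ ν :=
  Real.sInf_nonneg fun _ h => h.1.le

lemma bddBelow_lpSet (μ ν : Measure X) : BddBelow (lpSet μ ν) := ⟨0, fun _ h => h.1.le⟩

lemma isUpperSet_lpSet (μ ν : Measure X) : IsUpperSet (lpSet μ ν) :=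
  fun _ _ hle ⟨hpos, h⟩ => ⟨hpos.trans_le hle, fun A hA => (h A hA).trans (by gcongr)⟩

lemma lpSet_nonempty (μ ν : Measure X) [IsProbabilityMeasure μ] : (lpSet μ ν).Nonempty :=
  ⟨1, one_pos, fun A _ => by simpa using prob_le_one.trans le_add_self⟩

lemma bddBelow_switnessSet (s : ℝ) (ν : Measure X) (x : X) : BddBelow (switnessSet s ν x) :=
  ⟨0, fun _ h => h.1.le⟩

lemma isUpperSet_switnessSet (s : ℝ) (ν : Measure X) (x : X) :
    IsUpperSet (switnessSet s ν x) :=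
  fun _ _ hle ⟨hpos, h⟩ => ⟨hpos.trans_le hle, h.trans (by gcongr)⟩

lemma switnessSet_nonempty (s : ℝ) (ν : Measure X) (x : X) : (switnessSet s ν x).Nonempty :=
  ⟨|s| + 1, by positivity,
    (ENNReal.ofReal_le_ofReal ((le_abs_self s).trans (le_add_of_nonneg_right zero_le_one))).trans
      le_add_self⟩

variable [MeasurableSingletonClass X]

/-- Only the sets containing `x` matter, and among them `{x}` is the hardest to satisfy. -/
lemma switness_eq_sInf_switnessSet (s : ℝ) (ν : ProbabilityMeasure X) (x : X) :
    switness s ν x = sInf (switnessSet s ν x) := by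
  refine congrArg sInf (Set.ext fun ε => and_congr_right fun _ => ⟨fun h => ?_, fun h A _ => ?_⟩)
  · simpa [diracPM, thickening_singleton] using h {x} (measurableSet_singleton x)
  · by_cases hxA : x ∈ A
    · simpa [diracPM, hxA] using h.trans (by gcongr; exact ball_subset_thickening hxA ε)
    · simp [diracPM, hxA]

end LevyProkhorov

section Comparison

variable {X : Type*} [MetricSpace X] [MeasurableSpace X] {α β ν : Measure X} {s : ℝ} {x : X}

/-- For `x ∈ A`, the mass `s` at `x` is covered by `ν` and `ε` (witness condition), and the mass
`β univ` at `x` by `β` itself, which lives in `ball x ε ⊆ thickening ε A`. -/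
lemma switnessSet_inter_Ioi_subset_lpSet {a : ℝ} (hβ : β (closedBall x a)ᶜ = 0) :
    switnessSet s ν x ∩ Ioi a ⊆
      lpSet (α + (ENNReal.ofReal s + β univ) • Measure.dirac x)
        (α + β + ENNReal.ofReal s • ν) := by
  rintro ε ⟨⟨hε, hsε⟩, haε⟩
  refine ⟨hε, fun A hA => ?_⟩
  have hαA : α A ≤ α (thickening ε A) := measure_mono (self_subset_thickening hε A)
  simp only [Measure.add_apply, Measure.smul_apply, smul_eq_mul]
  by_cases hxA : x ∈ A
  · have hball : ball x ε ⊆ thickening ε A := ball_subset_thickening hxA ε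
    have hβball : β univ ≤ β (ball x ε) :=
      calc β univ ≤ β (closedBall x a) + β (closedBall x a)ᶜ := measure_univ_le_add_compl _
        _ ≤ β (ball x ε) := by rw [hβ, add_zero]; exact measure_mono (closedBall_subset_ball haε)
    rw [Measure.dirac_apply_of_mem hxA, mul_one]
    calc α A + (ENNReal.ofReal s + β univ)
        ≤ α (thickening ε A) + (ENNReal.ofReal s * ν (ball x ε) + ENNReal.ofReal ε
          + β (ball x ε)) := by gcongr
      _ = α (thickening ε A) + β (ball x ε) + ENNReal.ofReal s * ν (ball x ε)
          + ENNReal.ofReal ε := by ring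
      _ ≤ α (thickening ε A) + β (thickening ε A) + ENNReal.ofReal s * ν (thickening ε A)
          + ENNReal.ofReal ε := by gcongr
  · rw [Measure.dirac_apply' x hA, indicator_of_notMem hxA, mul_zero, add_zero]
    exact hαA.trans (by rw [add_assoc, add_assoc]; exact le_self_add)

variable [MeasurableSingletonClass X]

/-- Test with `A = {x}`: as `α` does not charge `ball x ε`, the mass `β univ` at `x` can only be
covered by `β` itself, and cancels. -/
lemma lpSet_inter_Iic_subset_switnessSet [IsFiniteMeasure β] {b : ℝ}
    (hα : α (ball x b) = 0) :
    lpSet (α + (ENNReal.ofReal s + β univ) • Measure.dirac x) (α + β + ENNReal.ofReal s • ν)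
      ∩ Iic b ⊆ switnessSet s ν x := by
  rintro ε ⟨⟨hε, hlp⟩, hεb⟩
  refine ⟨hε, ?_⟩
  have hαx : α {x} = 0 :=
    measure_mono_null (singleton_subset_iff.2 (mem_ball_self (hε.trans_le hεb))) hα
  have hαε : α (ball x ε) = 0 := measure_mono_null (ball_subset_ball hεb) hα
  have h := hlp {x} (measurableSet_singleton x)
  simp only [Measure.add_apply, Measure.smul_apply, smul_eq_mul, thickening_singleton,
    Measure.dirac_apply_of_mem (mem_singleton x), mul_one, hαx, hαε, zero_add] at h
  refine (ENNReal.add_le_add_iff_right (measure_ne_top β univ)).1 (h.trans ?_)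
  calc β (ball x ε) + ENNReal.ofReal s * ν (ball x ε) + ENNReal.ofReal ε
      = ENNReal.ofReal s * ν (ball x ε) + ENNReal.ofReal ε + β (ball x ε) := by ring
    _ ≤ ENNReal.ofReal s * ν (ball x ε) + ENNReal.ofReal ε + β univ := by
      gcongr; exact subset_univ _

variable [IsFiniteMeasure β] {η ϑ ϑt : ProbabilityMeasure X}

lemma switness_le_of_LPdist_le
    (hη : (η : Measure X) = α + (ENNReal.ofReal s + β univ) • Measure.dirac x)
    (hϑ : (ϑ : Measure X) = α + β + ENNReal.ofReal s • (ϑt : Measure X))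
    {b c : ℝ} (hα : α (ball x b) = 0) (hc : LPdist η ϑ ≤ c) (hcb : c < b) :
    switness s ϑt x ≤ c := by
  rw [LPdist_eq_sInf_lpSet] at hc
  rw [switness_eq_sInf_switnessSet]
  refine csInf_le_of_inter_Ioc_subset (bddBelow_switnessSet _ _ _) (isUpperSet_lpSet _ _)
    (lpSet_nonempty _ _) ?_ le_rfl hc hcb
  rw [hη, hϑ]
  exact (inter_subset_inter_right _ Ioc_subset_Iic_self).trans
    (lpSet_inter_Iic_subset_switnessSet hα)

lemma switness_eq_LPdist
    (hη : (η : Measure X) = α + (ENNReal.ofReal s + β univ) • Measure.dirac x)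
    (hϑ : (ϑ : Measure X) = α + β + ENNReal.ofReal s • (ϑt : Measure X))
    {a b : ℝ} (hα : α (ball x b) = 0) (hβ : β (closedBall x a)ᶜ = 0)
    (ha : a < LPdist η ϑ) (hb : switness s ϑt x ≤ b) :
    switness s ϑt x = LPdist η ϑ := by
  rw [switness_eq_sInf_switnessSet] at hb ⊢
  rw [LPdist_eq_sInf_lpSet] at ha ⊢
  refine csInf_eq_of_inter_subset (bddBelow_switnessSet _ _ _) (isUpperSet_switnessSet _ _ _)
    (switnessSet_nonempty _ _ _) (bddBelow_lpSet _ _) (isUpperSet_lpSet _ _)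
    (lpSet_nonempty _ _) ?_ ?_ ha hb <;> rw [hη, hϑ]
  exacts [switnessSet_inter_Ioi_subset_lpSet hβ, lpSet_inter_Iic_subset_switnessSet hα]

end Comparison

section ShellAtoms

variable {X : Type*} [MeasurableSpace X] (d : ℕ → ℕ) (w : ℕ → ℕ → ℝ) (y : ℕ → ℕ → X)

noncomputable def shellAtoms (J : Finset ℕ) : Measure X :=
  ∑ j ∈ J, ∑ l ∈ Finset.Icc 1 (d j), ENNReal.ofReal (w j l) • Measure.dirac (y j l)

instance (J : Finset ℕ) : IsFiniteMeasure (shellAtoms d w y J) where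
  measure_univ_lt_top := by simp [shellAtoms, ENNReal.sum_lt_top]

lemma shellAtoms_Icc_one_add_Ioc {r k : ℕ} (hrk : r ≤ k) :
    shellAtoms d w y (Finset.Icc 1 r) + shellAtoms d w y (Finset.Ioc r k) =
      shellAtoms d w y (Finset.Icc 1 k) :=
  Finset.sum_Icc_one_add_sum_Ioc _ hrk

lemma shellAtoms_univ {J : Finset ℕ} (hw : ∀ j ∈ J, ∀ l ∈ Finset.Icc 1 (d j), 0 ≤ w j l) :
    shellAtoms d w y J univ = ENNReal.ofReal (∑ j ∈ J, ∑ l ∈ Finset.Icc 1 (d j), w j l) := by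
  rw [ENNReal.ofReal_sum_of_nonneg fun j hj => Finset.sum_nonneg (hw j hj)]
  simp only [shellAtoms, Measure.coe_finsetSum, Finset.sum_apply, Measure.smul_apply,
    Measure.dirac_apply_of_mem (mem_univ _), smul_eq_mul, mul_one]
  exact Finset.sum_congr rfl fun j hj => (ENNReal.ofReal_sum_of_nonneg (hw j hj)).symm

lemma ofReal_one_sub_eq_add_shellAtoms_univ {wt : ℝ} {r k : ℕ} (hrk : r ≤ k)
    (hw : ∀ j ∈ Finset.Icc 1 k, ∀ l ∈ Finset.Icc 1 (d j), 0 ≤ w j l)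
    (hwt : wt = 1 - ∑ j ∈ Finset.Icc 1 k, ∑ l ∈ Finset.Icc 1 (d j), w j l) (hwt0 : 0 ≤ wt) :
    ENNReal.ofReal (1 - ∑ j ∈ Finset.Icc 1 r, ∑ l ∈ Finset.Icc 1 (d j), w j l) =
      ENNReal.ofReal wt + shellAtoms d w y (Finset.Ioc r k) univ := by
  have hsplit := Finset.sum_Icc_one_add_sum_Ioc (fun j => ∑ l ∈ Finset.Icc 1 (d j), w j l) hrk
  have hw' : ∀ j ∈ Finset.Ioc r k, ∀ l ∈ Finset.Icc 1 (d j), 0 ≤ w j l := fun j hj =>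
    hw j (Finset.mem_Icc.2 ⟨(Finset.mem_Ioc.1 hj).1.trans_le' r.zero_le, (Finset.mem_Ioc.1 hj).2⟩)
  rw [shellAtoms_univ d w y hw',
    ← ENNReal.ofReal_add hwt0 (Finset.sum_nonneg fun j hj => Finset.sum_nonneg (hw' j hj))]
  congr 1
  linarith

variable {d w y} [MeasurableSingletonClass X]

lemma shellAtoms_apply_eq_zero {J : Finset ℕ} {B : Set X}
    (h : ∀ j ∈ J, ∀ l ∈ Finset.Icc 1 (d j), y j l ∉ B) : shellAtoms d w y J B = 0 := by
  simp +contextual [shellAtoms, Finset.sum_eq_zero, h]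

lemma shellAtoms_Icc_ball_eq_zero [MetricSpace X] {x : X} {ρ : ℕ → ℝ} {k r : ℕ}
    (hρ : AntitoneOn ρ (Icc 1 k))
    (hdist : ∀ j ∈ Finset.Icc 1 k, ∀ l ∈ Finset.Icc 1 (d j), dist (y j l) x = ρ j)
    (hr : r ≤ k) : shellAtoms d w y (Finset.Icc 1 r) (ball x (ρ r)) = 0 :=
  shellAtoms_apply_eq_zero fun j hj l hl => by
    obtain ⟨hj1, hjr⟩ := Finset.mem_Icc.1 hj
    rw [mem_ball, hdist j (Finset.mem_Icc.2 ⟨hj1, hjr.trans hr⟩) l hl, not_lt]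
    exact hρ ⟨hj1, hjr.trans hr⟩ ⟨hj1.trans hjr, hr⟩ hjr

lemma shellAtoms_Ioc_compl_closedBall_eq_zero [MetricSpace X] {x : X} {ρ : ℕ → ℝ} {k r : ℕ}
    (hρ : AntitoneOn ρ (Icc 1 k))
    (hdist : ∀ j ∈ Finset.Icc 1 k, ∀ l ∈ Finset.Icc 1 (d j), dist (y j l) x = ρ j)
    (hr : r < k) : shellAtoms d w y (Finset.Ioc r k) (closedBall x (ρ (r + 1)))ᶜ = 0 :=
  shellAtoms_apply_eq_zero fun j hj l hl => by
    obtain ⟨hrj, hjk⟩ := Finset.mem_Ioc.1 hj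
    rw [notMem_compl_iff, mem_closedBall, hdist j (Finset.mem_Icc.2 ⟨by omega, hjk⟩) l hl]
    exact hρ ⟨by omega, hr⟩ ⟨by omega, hjk⟩ hrj

end ShellAtoms

theorem switness_of_remainder_general {X : Type*} [NormedAddCommGroup X]
    [MeasurableSpace X] [BorelSpace X]
    (ϑ : ProbabilityMeasure X) (x : X)
    (k : ℕ) (hk : 1 ≤ k)
    (d : ℕ → ℕ)
    (y : ℕ → ℕ → X)
    (ρ : ℕ → ℝ)
    (hρ : ∀ j ∈ Finset.Icc 1 k, ∀ l ∈ Finset.Icc 1 (d j), ‖x - y j l‖ = ρ j)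
    (hρdec : ∀ j ∈ Finset.Icc 1 (k - 1), ρ (j + 1) < ρ j)
    (w : ℕ → ℕ → ℝ)
    (hw : ∀ j ∈ Finset.Icc 1 k, ∀ l ∈ Finset.Icc 1 (d j),
      0 < w j l ∧ (ϑ : Measure X) {y j l} = ENNReal.ofReal (w j l))
    (wt : ℝ)
    (hwt : wt = 1 - ∑ j ∈ Finset.Icc 1 k, ∑ l ∈ Finset.Icc 1 (d j), w j l)
    (hwtpos : 0 < wt)
    (η : ℕ → ProbabilityMeasure X)
    (hη : ∀ r ∈ Finset.Icc 0 k, (η r : Measure X) =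
      (∑ j ∈ Finset.Icc 1 r, ∑ l ∈ Finset.Icc 1 (d j),
        ENNReal.ofReal (w j l) • Measure.dirac (y j l)) +
      ENNReal.ofReal (1 - ∑ j ∈ Finset.Icc 1 r, ∑ l ∈ Finset.Icc 1 (d j), w j l) •
        Measure.dirac x)
    (ϑt : ProbabilityMeasure X)
    (hϑt : (ϑ : Measure X) =
      (∑ j ∈ Finset.Icc 1 k, ∑ l ∈ Finset.Icc 1 (d j),
        ENNReal.ofReal (w j l) • Measure.dirac (y j l)) +
      ENNReal.ofReal wt • (ϑt : Measure X)) :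
    (¬ LPdist (η 0) ϑ ≤ ρ 1 → switness wt ϑt x = LPdist (diracPM x) ϑ) ∧
    (∀ r : ℕ, 1 ≤ r → r < k → LPdist (η (r - 1)) ϑ ≤ ρ r → ¬ LPdist (η r) ϑ ≤ ρ (r + 1) →
      switness wt ϑt x = LPdist (η r) ϑ) ∧
    (LPdist (η (k - 1)) ϑ ≤ ρ k → switness wt ϑt x = LPdist (η k) ϑ) := by
  have hρanti := antitoneOn_Icc_one_of_add_one_lt hρdec
  have hdist : ∀ j ∈ Finset.Icc 1 k, ∀ l ∈ Finset.Icc 1 (d j), dist (y j l) x = ρ j := by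
    simpa only [dist_comm (y _ _), dist_eq_norm] using hρ
  -- `η r` and `ϑ` share the atoms of the inner shells `1, …, r`; `η r` moves the others to `x`.
  have hη' (r : ℕ) (hr : r ≤ k) : (η r : Measure X) = shellAtoms d w y (Finset.Icc 1 r) +
      (ENNReal.ofReal wt + shellAtoms d w y (Finset.Ioc r k) univ) • Measure.dirac x := by
    rw [hη r (Finset.mem_Icc.2 ⟨r.zero_le, hr⟩), ofReal_one_sub_eq_add_shellAtoms_univ d w y hr
      (fun j hj l hl => (hw j hj l hl).1.le) hwt hwtpos.le]
    rfl
  have hϑ' (r : ℕ) (hr : r ≤ k) : (ϑ : Measure X) = shellAtoms d w y (Finset.Icc 1 r) +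
      shellAtoms d w y (Finset.Ioc r k) + ENNReal.ofReal wt • (ϑt : Measure X) := by
    rw [shellAtoms_Icc_one_add_Ioc d w y hr, hϑt]
    rfl
  have hinner (r : ℕ) (hr : r ≤ k) : shellAtoms d w y (Finset.Icc 1 r) (ball x (ρ r)) = 0 :=
    shellAtoms_Icc_ball_eq_zero hρanti hdist hr
  have houter (r : ℕ) (hr : r < k) :
      shellAtoms d w y (Finset.Ioc r k) (closedBall x (ρ (r + 1)))ᶜ = 0 :=
    shellAtoms_Ioc_compl_closedBall_eq_zero hρanti hdist hr
  have hempty (b : ℝ) : shellAtoms d w y (Finset.Icc 1 0) (ball x b) = 0 ∧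
      shellAtoms d w y (Finset.Ioc k k) (closedBall x b)ᶜ = 0 := by
    simp [shellAtoms]
  have hP_le (r : ℕ) (hr1 : 1 ≤ r) (hrk : r ≤ k) (hP : LPdist (η (r - 1)) ϑ ≤ ρ r) :
      switness wt ϑt x ≤ ρ r := by
    rcases hr1.eq_or_lt with rfl | hr2
    · exact switness_le_of_LPdist_le (hη' 0 k.zero_le) (hϑ' 0 k.zero_le) (hempty _).1 hP
        (lt_add_one (ρ 1))
    · refine switness_le_of_LPdist_le (hη' _ (by omega)) (hϑ' _ (by omega))
        (hinner (r - 1) (by omega)) hP ?_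
      simpa [Nat.sub_add_cancel hr1] using hρdec (r - 1) (Finset.mem_Icc.2 ⟨by omega, by omega⟩)
  refine ⟨fun hP => ?_, fun r hr1 hrk hP hQ => ?_, fun hP => ?_⟩
  · have hη0 : η 0 = diracPM x := Subtype.ext (by simp [hη 0 (by simp), diracPM])
    rw [← hη0]
    exact switness_eq_LPdist (hη' 0 k.zero_le) (hϑ' 0 k.zero_le) (hempty _).1 (houter 0 hk)
      (not_le.1 hP) le_rfl
  · exact switness_eq_LPdist (hη' r hrk.le) (hϑ' r hrk.le) (hinner r hrk.le) (houter r hrk)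
      (not_le.1 hQ) (hP_le r hr1 hrk.le hP)
  · exact switness_eq_LPdist (hη' k le_rfl) (hϑ' k le_rfl) (hinner k le_rfl) (hempty (-1)).2
      (neg_one_lt_zero.trans_le (LPdist_nonneg _ _)) (hP_le k hk le_rfl hP)

/-- Lemma 3.6: the `w̃`-witness function of the remaining part `ϑ̃` of `ϑ` (after removing
the detected atoms `y_{j,l}`) can be expressed at the point `x` through the Lévy–Prokhorov
distances between `ϑ` and the measures `η_r`. Property `(P_r)` is `π(η_{r-1}, ϑ) ≤ ρ_r`. -/
theorem switness_of_remainder {X : Type*} [NormedAddCommGroup X] [NormedSpace ℝ X]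
    [CompleteSpace X] [SeparableSpace X] [MeasurableSpace X] [BorelSpace X]
    (ϑ : ProbabilityMeasure X) (x : X)
    (k : ℕ) (hk : 1 ≤ k)
    (d : ℕ → ℕ) (hd : ∀ j ∈ Finset.Icc 1 k, 1 ≤ d j)
    (y : ℕ → ℕ → X)
    (hy : ∀ j ∈ Finset.Icc 1 k, ∀ l ∈ Finset.Icc 1 (d j), ∀ j' ∈ Finset.Icc 1 k,
      ∀ l' ∈ Finset.Icc 1 (d j'), y j l = y j' l' → j = j' ∧ l = l')
    (ρ : ℕ → ℝ)
    (hρ : ∀ j ∈ Finset.Icc 1 k, ∀ l ∈ Finset.Icc 1 (d j), ‖x - y j l‖ = ρ j)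
    (hρpos : 0 < ρ k)
    (hρdec : ∀ j ∈ Finset.Icc 1 (k - 1), ρ (j + 1) < ρ j)
    (w : ℕ → ℕ → ℝ)
    (hw : ∀ j ∈ Finset.Icc 1 k, ∀ l ∈ Finset.Icc 1 (d j),
      0 < w j l ∧ (ϑ : Measure X) {y j l} = ENNReal.ofReal (w j l))
    (wt : ℝ)
    (hwt : wt = 1 - ∑ j ∈ Finset.Icc 1 k, ∑ l ∈ Finset.Icc 1 (d j), w j l)
    (hwtpos : 0 < wt)
    (η : ℕ → ProbabilityMeasure X)
    (hη : ∀ r ∈ Finset.Icc 0 k, (η r : Measure X) =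
      (∑ j ∈ Finset.Icc 1 r, ∑ l ∈ Finset.Icc 1 (d j),
        ENNReal.ofReal (w j l) • Measure.dirac (y j l)) +
      ENNReal.ofReal (1 - ∑ j ∈ Finset.Icc 1 r, ∑ l ∈ Finset.Icc 1 (d j), w j l) •
        Measure.dirac x)
    (ϑt : ProbabilityMeasure X)
    (hϑt : (ϑ : Measure X) =
      (∑ j ∈ Finset.Icc 1 k, ∑ l ∈ Finset.Icc 1 (d j),
        ENNReal.ofReal (w j l) • Measure.dirac (y j l)) +
      ENNReal.ofReal wt • (ϑt : Measure X)) :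
    (¬ LPdist (η 0) ϑ ≤ ρ 1 → switness wt ϑt x = LPdist (diracPM x) ϑ) ∧
    (∀ r : ℕ, 1 ≤ r → r < k → LPdist (η (r - 1)) ϑ ≤ ρ r → ¬ LPdist (η r) ϑ ≤ ρ (r + 1) →
      switness wt ϑt x = LPdist (η r) ϑ) ∧
    (LPdist (η (k - 1)) ϑ ≤ ρ k → switness wt ϑt x = LPdist (η k) ϑ) :=
  switness_of_remainder_general ϑ x k hk d y ρ hρ hρdec w hw wt hwt hwtpos η hη ϑt hϑt
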